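/- For all φ₀, φ₁ with 0 < φ₀ < φ₁ < π/2, the map α ↦ T₁(α, φ₀) − T₁(α, φ₁) is strictly increasing on (φ₁, π/2); this follows from the sign of the mixed second derivative ∂²T₁/∂φ∂α = −sin 2α/(cos 2φ − cos 2α)^{3/2} < 0 for 0 < φ < α < π/2. -/

import Mathlib

/-!
Since `T₁(α, φ₀) − T₁(α, φ₁) = −∫_{φ₀}^{φ₁} dx / √(cos 2x − cos 2α)` and `cos 2α` decreases
strictly on `(0, π/2)`, the integrand decreases strictly in `α`, so the difference increases.
This is the integrated form of the sign of the mixed derivative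
`∂_α (cos 2φ − cos 2α)^{-1/2} = −sin 2α / (cos 2φ − cos 2α)^{3/2} < 0`.
-/

open Real

/-- The time map `T₁(α, φ) = ∫₀^φ dx / √(cos 2x − cos 2α)`. -/
noncomputable def timeMapT1 (α φ : ℝ) : ℝ :=
  ∫ x in (0:ℝ)..φ, 1 / Real.sqrt (Real.cos (2 * x) - Real.cos (2 * α))

lemma cos_two_mul_sub_cos_two_mul_pos {x α : ℝ} (hx : 0 ≤ x) (hxα : x < α) (hα : α ≤ π / 2) :
    0 < cos (2 * x) - cos (2 * α) :=
  sub_pos.2 <| cos_lt_cos_of_nonneg_of_le_pi (by linarith) (by linarith) (by linarith)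

lemma hasDerivAt_one_div_sqrt_sub_cos_two_mul {c α : ℝ} (hα : 0 < c - cos (2 * α)) :
    HasDerivAt (fun a => 1 / √(c - cos (2 * a)))
      (-sin (2 * α) / (c - cos (2 * α)) ^ ((3 : ℝ) / 2)) α := by
  have hy : HasDerivAt (fun a => c - cos (2 * a)) (2 * sin (2 * α)) α := by
    simpa [mul_comm] using ((hasDerivAt_id α).const_mul 2).cos.const_sub c
  have hsqrt := (hy.sqrt hα.ne').inv (sqrt_pos.2 hα).ne'
  simp only [one_div]
  refine hsqrt.congr_deriv ?_
  rw [show (3 : ℝ) / 2 = 1 + 1 / 2 by norm_num, rpow_add hα, rpow_one, ← sqrt_eq_rpow,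
    sq_sqrt hα.le]
  field_simp

lemma continuousOn_one_div_sqrt_sub_cos_two_mul {φ α : ℝ} (hφα : φ < α) (hα : α ≤ π / 2) :
    ContinuousOn (fun x => 1 / √(cos (2 * x) - cos (2 * α))) (Set.Icc 0 φ) :=
  continuousOn_const.div (by fun_prop) fun x hx =>
    (sqrt_pos.2 <| cos_two_mul_sub_cos_two_mul_pos hx.1 (hx.2.trans_lt hφα) hα).ne'

lemma one_div_sqrt_sub_cos_two_mul_lt {x a b : ℝ} (hx : 0 ≤ x) (hxa : x < a) (hab : a < b)
    (hb : b ≤ π / 2) :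
    1 / √(cos (2 * x) - cos (2 * b)) < 1 / √(cos (2 * x) - cos (2 * a)) := by
  have hcos : cos (2 * b) < cos (2 * a) :=
    cos_lt_cos_of_nonneg_of_le_pi (by linarith) (by linarith) (by linarith)
  have hpos := cos_two_mul_sub_cos_two_mul_pos hx hxa (hab.le.trans hb)
  gcongr

lemma timeMapT1_sub_timeMapT1 {φ₀ φ₁ α : ℝ} (h₀ : 0 ≤ φ₀) (h₀₁ : φ₀ ≤ φ₁) (h₁α : φ₁ < α)
    (hα : α ≤ π / 2) :
    timeMapT1 α φ₀ - timeMapT1 α φ₁ = -∫ x in φ₀..φ₁, 1 / √(cos (2 * x) - cos (2 * α)) := by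
  have hint₁ := (continuousOn_one_div_sqrt_sub_cos_two_mul h₁α hα).intervalIntegrable_of_Icc
    (μ := MeasureTheory.volume) (h₀.trans h₀₁)
  have hint₀ := hint₁.mono_set (Set.uIcc_subset_uIcc_left (Set.mem_uIcc_of_le h₀ h₀₁))
  rw [timeMapT1, timeMapT1, intervalIntegral.integral_interval_sub_left hint₀ hint₁,
    intervalIntegral.integral_symm]

lemma timeMapT1_sub_timeMapT1_strictMonoOn {φ₀ φ₁ : ℝ} (h₀ : 0 ≤ φ₀) (h₀₁ : φ₀ < φ₁) :
    StrictMonoOn (fun α => timeMapT1 α φ₀ - timeMapT1 α φ₁) (Set.Ioo φ₁ (π / 2)) := by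
  intro a ha b hb hab
  simp only [timeMapT1_sub_timeMapT1 h₀ h₀₁.le ha.1 ha.2.le,
    timeMapT1_sub_timeMapT1 h₀ h₀₁.le hb.1 hb.2.le, neg_lt_neg_iff]
  have hsub : Set.Icc φ₀ φ₁ ⊆ Set.Icc 0 φ₁ := Set.Icc_subset_Icc_left h₀
  refine intervalIntegral.integral_lt_integral_of_continuousOn_of_le_of_exists_lt h₀₁
    ((continuousOn_one_div_sqrt_sub_cos_two_mul hb.1 hb.2.le).mono hsub)
    ((continuousOn_one_div_sqrt_sub_cos_two_mul ha.1 ha.2.le).mono hsub)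
    (fun x hx => (one_div_sqrt_sub_cos_two_mul_lt (h₀.trans hx.1.le)
      (hx.2.trans_lt ha.1) hab hb.2.le).le)
    ⟨φ₀, Set.left_mem_Icc.2 h₀₁.le, one_div_sqrt_sub_cos_two_mul_lt h₀ (h₀₁.trans ha.1) hab hb.2.le⟩

theorem timeMapT1_difference_strictMono_general (φ₀ φ₁ : ℝ) (h₀ : 0 < φ₀)
    (h₀₁ : φ₀ < φ₁) :
    StrictMonoOn (fun α => timeMapT1 α φ₀ - timeMapT1 α φ₁)
      (Set.Ioo φ₁ (π / 2)) ∧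
    ∀ φ α : ℝ, 0 < φ → φ < α → α < π / 2 →
      HasDerivAt (fun a => 1 / Real.sqrt (Real.cos (2 * φ) - Real.cos (2 * a)))
        (-Real.sin (2 * α) / (Real.cos (2 * φ) - Real.cos (2 * α)) ^ ((3:ℝ)/2)) α ∧
      -Real.sin (2 * α) / (Real.cos (2 * φ) - Real.cos (2 * α)) ^ ((3:ℝ)/2) < 0 := by
  refine ⟨timeMapT1_sub_timeMapT1_strictMonoOn h₀.le h₀₁, fun φ α hφ hφα hα => ?_⟩
  have hbase := cos_two_mul_sub_cos_two_mul_pos hφ.le hφα hα.le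
  have hsin : 0 < sin (2 * α) := sin_pos_of_pos_of_lt_pi (by linarith) (by linarith)
  exact ⟨hasDerivAt_one_div_sqrt_sub_cos_two_mul hbase,
    div_neg_of_neg_of_pos (neg_neg_of_pos hsin) (rpow_pos_of_pos hbase _)⟩

/-- For `0 < φ₀ < φ₁ < π/2`, the map `α ↦ T₁(α, φ₀) − T₁(α, φ₁)` is strictly
increasing on `(φ₁, π/2)`; this follows from the sign of the mixed second
derivative `∂²T₁/∂φ∂α = −sin 2α/(cos 2φ − cos 2α)^{3/2} < 0` for
`0 < φ < α < π/2` (here `∂T₁/∂φ` is the integrand `1/√(cos 2φ − cos 2α)`). -/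
theorem timeMapT1_difference_strictMono (φ₀ φ₁ : ℝ) (h₀ : 0 < φ₀)
    (h₀₁ : φ₀ < φ₁) (h₁ : φ₁ < π / 2) :
    StrictMonoOn (fun α => timeMapT1 α φ₀ - timeMapT1 α φ₁)
      (Set.Ioo φ₁ (π / 2)) ∧
    ∀ φ α : ℝ, 0 < φ → φ < α → α < π / 2 →
      HasDerivAt (fun a => 1 / Real.sqrt (Real.cos (2 * φ) - Real.cos (2 * a)))
        (-Real.sin (2 * α) / (Real.cos (2 * φ) - Real.cos (2 * α)) ^ ((3:ℝ)/2)) α ∧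
      -Real.sin (2 * α) / (Real.cos (2 * φ) - Real.cos (2 * α)) ^ ((3:ℝ)/2) < 0 :=
  timeMapT1_difference_strictMono_general φ₀ φ₁ h₀ h₀₁
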